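/- Let X be a locally compact separable metric space, d a metric of compact type on X, and f : X → X a perfect mapping. Then h^d(f) = c(f), i.e., the d-entropy of f (defined via separated sets over the whole space X) equals the co-compact entropy of f. -/

import Mathlib

/-!
A co-compact open cover lifts to an open cover of the completion of `X`, which is compact because
a metric of compact type is totally bounded. With `δ` a Lebesgue number of the lift, every Bowen
ball of radius `δ / 2` lies in a cell of `⋁ f⁻ⁱ𝒰`, and a maximal `(n, δ / 2)`-separated set is
spanning; so `N(⋁ f⁻ⁱ𝒰) ≤ s_n(δ / 2, X, f)` and `c(f) ≤ h^d(f)`.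

Conversely, `f` is uniformly continuous, since its extension fixing `∞` is continuous on the
compact space `X̃`; so `δ`-close points stay `ε`-close for `m` steps. Cover `X` by the co-compact
sets `B(w, δ / 2) ∪ V`, with `V` a small neighbourhood of `∞`: two points of one member that
are both in `V` or both outside `V` are `δ`-close. Hence a cell of the `(K m)`-fold join contains
at most `2 ^ K` points of a `(K m, ε)`-separated set, which gives
`s(ε, X, f) ≤ log 2 / m + c(f)`; now let `m → ∞`.
-/

open Set Filter Topology ENNReal

section Defs

variable {X Y : Type*}

/-- An open set with compact complement. -/
def IsCoCompactOpen [TopologicalSpace X] (U : Set X) : Prop :=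
  IsOpen U ∧ IsCompact Uᶜ

/-- A co-compact open cover: every member is co-compact open, and the family covers `X`. -/
def IsCoCompactCover [TopologicalSpace X] (𝒰 : Set (Set X)) : Prop :=
  (∀ U ∈ 𝒰, IsCoCompactOpen U) ∧ ⋃₀ 𝒰 = Set.univ

/-- A perfect map: continuous, closed, with compact fibers. -/
def IsPerfectMap [TopologicalSpace X] [TopologicalSpace Y] (f : X → Y) : Prop :=
  Continuous f ∧ IsClosedMap f ∧ ∀ y : Y, IsCompact (f ⁻¹' {y})

/-- `coverN 𝒰` : the minimal cardinality of a finite subcover of `𝒰`. -/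
noncomputable def coverN (𝒰 : Set (Set X)) : ℕ :=
  sInf {n | ∃ 𝒱 : Finset (Set X), ↑𝒱 ⊆ 𝒰 ∧ ⋃₀ (𝒱 : Set (Set X)) = Set.univ ∧ 𝒱.card = n}

/-- `H(𝒰) = log N(𝒰)`, as a real number. -/
noncomputable def covHR (𝒰 : Set (Set X)) : ℝ :=
  Real.log (coverN 𝒰)

/-- `H(𝒰) = log N(𝒰)`, as an extended nonnegative real. -/
noncomputable def covH (𝒰 : Set (Set X)) : ℝ≥0∞ :=
  ENNReal.ofReal (Real.log (coverN 𝒰))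

/-- The join `𝒰 ∨ 𝒱 = {U ∩ V : U ∈ 𝒰, V ∈ 𝒱}` of two covers. -/
def covJoin (𝒰 𝒱 : Set (Set X)) : Set (Set X) :=
  Set.image2 (· ∩ ·) 𝒰 𝒱

/-- The preimage cover `f⁻¹(𝒰) = {f⁻¹(U) : U ∈ 𝒰}`. -/
def preimCover (f : X → Y) (𝒰 : Set (Set Y)) : Set (Set X) :=
  (fun U => f ⁻¹' U) '' 𝒰

/-- The iterated join `⋁_{i=0}^{n-1} f⁻ⁱ(𝒰)`. -/
def iterJoin (f : X → X) (𝒰 : Set (Set X)) (n : ℕ) : Set (Set X) :=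
  {W | ∃ u : Fin n → Set X, (∀ i, u i ∈ 𝒰) ∧ W = ⋂ i : Fin n, f^[(i : ℕ)] ⁻¹' u i}

/-- The co-compact entropy of `f` relative to the cover `𝒰`:
`c(f,𝒰) = lim_n (1/n) H(⋁_{i=0}^{n-1} f⁻ⁱ(𝒰))` (realized as a `limsup`). -/
noncomputable def cEntCover (f : X → X) (𝒰 : Set (Set X)) : ℝ≥0∞ :=
  Filter.atTop.limsup fun n : ℕ => covH (iterJoin f 𝒰 n) / (n : ℝ≥0∞)

/-- The co-compact entropy `c(f) = sup_𝒰 c(f,𝒰)` over all co-compact open covers. -/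
noncomputable def cEnt [TopologicalSpace X] (f : X → X) : ℝ≥0∞ :=
  ⨆ (𝒰 : Set (Set X)) (_ : IsCoCompactCover 𝒰), cEntCover f 𝒰

end Defs

section MetricDefs

variable {X : Type*}

/-- `E` is `(n,ε)`-separated for `f` w.r.t. the distance function `d`. -/
def IsNSepSet (d : X → X → ℝ) (f : X → X) (n : ℕ) (ε : ℝ) (E : Set X) : Prop :=
  ∀ x ∈ E, ∀ y ∈ E, x ≠ y → ∃ j < n, ε < d (f^[j] x) (f^[j] y)

/-- `s_n(ε,K,f)`: the maximal cardinality of an `(n,ε)`-separated subset of `K`. -/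
noncomputable def sepCard (d : X → X → ℝ) (f : X → X) (n : ℕ) (ε : ℝ) (K : Set X) : ℝ≥0∞ :=
  ⨆ (E : Finset X) (_ : ↑E ⊆ K ∧ IsNSepSet d f n ε ↑E), (E.card : ℝ≥0∞)

/-- Logarithm on `ℝ≥0∞`, with `elog ⊤ = ⊤`, truncated at `0` below. -/
noncomputable def elog (x : ℝ≥0∞) : ℝ≥0∞ :=
  if x = ⊤ then ⊤ else ENNReal.ofReal (Real.log x.toReal)

/-- `s(ε,K,f) = limsup_n (1/n) log s_n(ε,K,f)`. -/
noncomputable def sepEntEps (d : X → X → ℝ) (f : X → X) (ε : ℝ) (K : Set X) : ℝ≥0∞ :=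
  Filter.atTop.limsup fun n : ℕ => elog (sepCard d f n ε K) / (n : ℝ≥0∞)

/-- `s(K,f) = lim_{ε→0} s(ε,K,f)` (the limit of the monotone family, i.e. the supremum). -/
noncomputable def sepEnt (d : X → X → ℝ) (f : X → X) (K : Set X) : ℝ≥0∞ :=
  ⨆ (ε : ℝ) (_ : 0 < ε), sepEntEps d f ε K

/-- Bowen's entropy `h_d(f) = sup_K s(K,f)`, supremum over compact subsets. -/
noncomputable def bowenEnt [TopologicalSpace X] (d : X → X → ℝ) (f : X → X) : ℝ≥0∞ :=
  ⨆ (K : Set X) (_ : IsCompact K), sepEnt d f K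

/-- The `d`-entropy `h^d(f) = s(X,f)`. -/
noncomputable def dEnt (d : X → X → ℝ) (f : X → X) : ℝ≥0∞ :=
  sepEnt d f Set.univ

/-- A metric space structure on `X` is of compact type (relative to the ambient topology on
`X`) if it extends to a metric on the one-point compactification `OnePoint X` inducing the
topology of `OnePoint X`. -/
def IsCompactTypeMetric [TopologicalSpace X] (m : MetricSpace X) : Prop :=
  ∃ mc : MetricSpace (OnePoint X),
    mc.toUniformSpace.toTopologicalSpace = (inferInstance : TopologicalSpace (OnePoint X)) ∧
    ∀ x y : X, mc.dist ↑x ↑y = m.dist x y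

/-- The extension of `f : X → X` to the one-point compactification, fixing `∞`. -/
def onePointExtend (f : X → X) : OnePoint X → OnePoint X :=
  fun p => Option.rec OnePoint.infty (fun x => (↑(f x) : OnePoint X)) p

end MetricDefs

section MeasureDefs

open MeasureTheory

variable {X : Type*}

/-- A finite Borel partition of `X`. -/
def IsFinBorelPartition [MeasurableSpace X] (P : Finset (Set X)) : Prop :=
  (∀ A ∈ P, MeasurableSet A) ∧ ⋃₀ (P : Set (Set X)) = Set.univ ∧
    ∀ A ∈ P, ∀ B ∈ P, A ≠ B → A ∩ B = ∅

/-- `φ(x) = -x log x` (with `φ(0) = 0`). -/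
noncomputable def phiEnt (x : ℝ) : ℝ := -(x * Real.log x)

/-- `H_μ(⋁_{i=0}^{n-1} f⁻ⁱ𝒜) = Σ_{B} φ(μ(B))`, the sum over the cells of the iterated join of the
partition `P` (cells indexed by tuples of members of `P`; repeated empty cells contribute `0`). -/
noncomputable def partEntSum [MeasurableSpace X] (μ : Measure X) (f : X → X)
    (P : Finset (Set X)) (n : ℕ) : ℝ :=
  ∑ u : Fin n → {A // A ∈ P}, phiEnt ((μ (⋂ i : Fin n, f^[(i : ℕ)] ⁻¹' (u i : Set X))).toReal)

/-- The measure-theoretic (Kolmogorov–Sinai) entropy `h_μ(f)`. -/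
noncomputable def measEnt [MeasurableSpace X] (μ : Measure X) (f : X → X) : ℝ≥0∞ :=
  ⨆ (P : Finset (Set X)) (_ : IsFinBorelPartition P),
    Filter.atTop.limsup fun n : ℕ => ENNReal.ofReal (partEntSum μ f P n) / (n : ℝ≥0∞)

end MeasureDefs

open Metric

section Logarithm

lemma ofReal_log_le_ofReal_log {a b : ℝ} (ha : 0 ≤ a) (hab : a ≤ b) :
    ENNReal.ofReal (Real.log a) ≤ ENNReal.ofReal (Real.log b) := by
  rcases le_or_gt a 1 with h | h
  · simp [ENNReal.ofReal_eq_zero.mpr (Real.log_nonpos ha h)]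
  · exact ENNReal.ofReal_le_ofReal (Real.log_le_log (by linarith) hab)

lemma ofReal_log_natCast_mul_le (a b : ℕ) :
    ENNReal.ofReal (Real.log ((a * b : ℕ) : ℝ)) ≤
      ENNReal.ofReal (Real.log a) + ENNReal.ofReal (Real.log b) := by
  rcases eq_or_ne a 0 with rfl | ha
  · simp
  rcases eq_or_ne b 0 with rfl | hb
  · simp
  push_cast
  rw [Real.log_mul (by exact_mod_cast ha) (by exact_mod_cast hb)]
  exact ENNReal.ofReal_add_le

lemma elog_mono : Monotone elog := by
  intro x y h
  rcases eq_or_ne y ⊤ with rfl | hy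
  · simp [elog]
  have hx : x ≠ ⊤ := ne_top_of_le_ne_top hy h
  rw [elog, elog, if_neg hx, if_neg hy]
  exact ofReal_log_le_ofReal_log ENNReal.toReal_nonneg (ENNReal.toReal_mono hy h)

lemma elog_natCast (c : ℕ) : elog c = ENNReal.ofReal (Real.log c) := by
  simp [elog]

end Logarithm

section Limsup

lemma tendsto_const_div_natCast_atTop {c : ℝ≥0∞} (hc : c ≠ ⊤) :
    Tendsto (fun n : ℕ => c / n) atTop (𝓝 0) := by
  simpa [div_eq_mul_inv] using
    ENNReal.Tendsto.const_mul ENNReal.tendsto_inv_nat_nhds_zero (Or.inr hc)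

lemma natDiv_succ_mul_div_le (c : ℝ≥0∞) {m n : ℕ} (hn : n ≠ 0) :
    ((n / m + 1 : ℕ) : ℝ≥0∞) * c / n ≤ c / m + c / n := by
  have hn' : (n : ℝ≥0∞) ≠ 0 := by exact_mod_cast hn
  have hnm : ((n / m : ℕ) : ℝ≥0∞) ≤ n / m := by
    rw [ENNReal.le_div_iff_mul_le (Or.inr hn') (Or.inl (natCast_ne_top m))]
    exact_mod_cast Nat.div_mul_le_self n m
  calc ((n / m + 1 : ℕ) : ℝ≥0∞) * c / n = (n / m : ℕ) * c / n + c / n := by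
        push_cast; rw [add_mul, one_mul, ENNReal.add_div]
    _ ≤ n / m * c / n + c / n := by gcongr
    _ = c / m + c / n := by
        rw [div_eq_mul_inv, div_eq_mul_inv, div_eq_mul_inv, div_eq_mul_inv,
          mul_right_comm, mul_right_comm (n : ℝ≥0∞), ENNReal.mul_inv_cancel hn' (natCast_ne_top n),
          one_mul, mul_comm]

lemma limsup_natCast_div_le_one {J : ℕ → ℕ} {m : ℕ} (hJ : ∀ n, J n ≤ n + m) :
    limsup (fun n : ℕ => (J n : ℝ≥0∞) / n) atTop ≤ 1 := by
  calc _ ≤ limsup (fun n : ℕ => 1 + (m : ℝ≥0∞) / n) atTop := by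
        refine limsup_le_limsup ((eventually_ne_atTop 0).mono fun n hn => ?_)
        calc (J n : ℝ≥0∞) / n ≤ (n + m : ℕ) / n := by gcongr; exact hJ n
          _ = 1 + (m : ℝ≥0∞) / n := by
              rw [Nat.cast_add, ENNReal.add_div,
                ENNReal.div_self (by exact_mod_cast hn) (natCast_ne_top n)]
    _ = 1 := by
        simpa using ((tendsto_const_div_natCast_atTop (natCast_ne_top m)).const_add 1).limsup_eq

lemma limsup_comp_div_le {b : ℕ → ℝ≥0∞} {J : ℕ → ℕ} {m : ℕ} (hJ : ∀ n, n ≤ J n ∧ J n ≤ n + m) :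
    limsup (fun n : ℕ => b (J n) / n) atTop ≤ limsup (fun n : ℕ => b n / n) atTop := by
  have hJtop : Tendsto J atTop atTop := tendsto_atTop_mono (fun n => (hJ n).1) tendsto_id
  have hfactor : ∀ᶠ n : ℕ in atTop, b (J n) / n = b (J n) / J n * (J n / n) := by
    filter_upwards [eventually_ne_atTop 0] with n hn
    have hJ0 : (J n : ℝ≥0∞) ≠ 0 := by
      exact_mod_cast ((Nat.pos_of_ne_zero hn).trans_le (hJ n).1).ne'
    rw [div_eq_mul_inv, div_eq_mul_inv, div_eq_mul_inv, mul_assoc, ← mul_assoc _ (J n : ℝ≥0∞),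
      ENNReal.inv_mul_cancel hJ0 (natCast_ne_top _), one_mul]
  have hratio := limsup_natCast_div_le_one fun n => (hJ n).2
  rcases eq_or_ne (limsup (fun n : ℕ => b n / n) atTop) ⊤ with htop | hfin
  · exact htop ▸ le_top
  have hcomp : limsup (fun n => b (J n) / J n) atTop ≤ limsup (fun n : ℕ => b n / n) atTop :=
    hJtop.limsup_comp_le_limsup (u := fun n : ℕ => b n / n)
  calc _ = limsup ((fun n => b (J n) / J n) * fun n : ℕ => (J n : ℝ≥0∞) / n) atTop :=
        limsup_congr hfactor
    _ ≤ limsup (fun n => b (J n) / J n) atTop * limsup (fun n : ℕ => (J n : ℝ≥0∞) / n) atTop :=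
        ENNReal.limsup_mul_le' (Or.inr (hratio.trans_lt one_lt_top).ne)
          (Or.inl (hcomp.trans_lt hfin.lt_top).ne)
    _ ≤ limsup (fun n : ℕ => b n / n) atTop * 1 := mul_le_mul' hcomp hratio
    _ = _ := mul_one _

lemma limsup_div_le_of_le_blocks {a b : ℕ → ℝ≥0∞} {c : ℝ≥0∞} (hc : c ≠ ⊤) {m : ℕ} (hm : 0 < m)
    (h : ∀ n, a n ≤ ((n / m + 1 : ℕ) : ℝ≥0∞) * c + b ((n / m + 1) * m)) :
    limsup (fun n : ℕ => a n / n) atTop ≤ c / m + limsup (fun n : ℕ => b n / n) atTop := by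
  have hJ : ∀ n, n ≤ (n / m + 1) * m ∧ (n / m + 1) * m ≤ n + m := fun n =>
    ⟨((Nat.div_lt_iff_lt_mul hm).mp (Nat.lt_succ_self _)).le, by
      rw [add_mul, one_mul]; exact Nat.add_le_add_right (Nat.div_mul_le_self n m) m⟩
  have hle : ∀ᶠ n : ℕ in atTop, a n / n ≤ c / n + (c / m + b ((n / m + 1) * m) / n) := by
    filter_upwards [eventually_ne_atTop 0] with n hn
    calc a n / n ≤ ((n / m + 1 : ℕ) : ℝ≥0∞) * c / n + b ((n / m + 1) * m) / n :=
          (ENNReal.div_le_div_right (h n) _).trans_eq ENNReal.add_div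
      _ ≤ c / m + c / n + b ((n / m + 1) * m) / n := by gcongr; exact natDiv_succ_mul_div_le c hn
      _ = c / n + (c / m + b ((n / m + 1) * m) / n) := by ring
  calc limsup (fun n : ℕ => a n / n) atTop
      ≤ limsup ((fun n : ℕ => c / n) + fun n => c / m + b ((n / m + 1) * m) / n) atTop :=
        limsup_le_limsup hle
    _ = c / m + limsup (fun n : ℕ => b ((n / m + 1) * m) / n) atTop := by
        rw [ENNReal.limsup_add_of_left_tendsto_zero (tendsto_const_div_natCast_atTop hc),
          limsup_const_add atTop _ _ (by isBoundedDefault) (by isBoundedDefault)]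
    _ ≤ c / m + limsup (fun n : ℕ => b n / n) atTop := by gcongr; exact limsup_comp_div_le hJ

end Limsup

section Covers

variable {X : Type*}

lemma coverN_le_card {𝒰 : Set (Set X)} {𝒱 : Finset (Set X)} (h𝒱 : ↑𝒱 ⊆ 𝒰)
    (hcov : ⋃₀ (𝒱 : Set (Set X)) = univ) : coverN 𝒰 ≤ 𝒱.card :=
  Nat.sInf_le ⟨𝒱, h𝒱, hcov, rfl⟩

lemma exists_subcover_card_eq_coverN {𝒰 : Set (Set X)} (hfin : 𝒰.Finite) (hcov : ⋃₀ 𝒰 = univ) :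
    ∃ 𝒱 : Finset (Set X), ↑𝒱 ⊆ 𝒰 ∧ ⋃₀ (𝒱 : Set (Set X)) = univ ∧ 𝒱.card = coverN 𝒰 :=
  Nat.sInf_mem (⟨_, hfin.toFinset, by simp, by simpa using hcov, rfl⟩ :
    ∃ n, ∃ 𝒱 : Finset (Set X), ↑𝒱 ⊆ 𝒰 ∧ ⋃₀ (𝒱 : Set (Set X)) = univ ∧ 𝒱.card = n)

lemma iterJoin_finite (f : X → X) {𝒰 : Set (Set X)} (h𝒰 : 𝒰.Finite) (n : ℕ) :
    (iterJoin f 𝒰 n).Finite := by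
  have : Finite 𝒰 := h𝒰.to_subtype
  refine (Set.finite_range fun u : Fin n → 𝒰 => ⋂ i : Fin n, f^[i] ⁻¹' (u i : Set X)).subset ?_
  rintro _ ⟨u, hu, rfl⟩
  exact ⟨fun i => ⟨u i, hu i⟩, rfl⟩

lemma sUnion_iterJoin (f : X → X) {𝒰 : Set (Set X)} (hcov : ⋃₀ 𝒰 = univ) (n : ℕ) :
    ⋃₀ iterJoin f 𝒰 n = univ := by
  refine eq_univ_of_forall fun x => ?_
  choose u hu hxu using fun i : Fin n => mem_sUnion.mp (hcov ▸ mem_univ (f^[i] x))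
  exact ⟨_, ⟨u, hu, rfl⟩, mem_iInter.mpr hxu⟩

end Covers

section Separated

variable {X : Type*} {f : X → X} {n : ℕ} {ε : ℝ}

lemma IsNSepSet.mono {d : X → X → ℝ} {E : Set X} (hE : IsNSepSet d f n ε E) {n' : ℕ}
    (hn : n ≤ n') : IsNSepSet d f n' ε E := fun x hx y hy hxy =>
  let ⟨j, hj, hd⟩ := hE x hx y hy hxy
  ⟨j, hj.trans_le hn, hd⟩

lemma IsNSepSet.card_le_sepCard {d : X → X → ℝ} {E : Finset X} {K : Set X}
    (hE : IsNSepSet d f n ε E) (hK : ↑E ⊆ K) : (E.card : ℝ≥0∞) ≤ sepCard d f n ε K :=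
  le_iSup₂ (f := fun (E : Finset X) (_ : ↑E ⊆ K ∧ IsNSepSet d f n ε ↑E) => (E.card : ℝ≥0∞))
    E ⟨hK, hE⟩

variable [MetricSpace X]

lemma IsNSepSet.insert {E : Set X} (hE : IsNSepSet dist f n ε E) {x : X}
    (hx : ∀ y ∈ E, ∃ j < n, ε < dist (f^[j] x) (f^[j] y)) : IsNSepSet dist f n ε (insert x E) := by
  rintro a (rfl | ha) b (rfl | hb) hab
  · exact absurd rfl hab
  · exact hx b hb
  · obtain ⟨j, hj, h⟩ := hx a ha
    exact ⟨j, hj, by rwa [dist_comm]⟩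
  · exact hE a ha b hb hab

lemma exists_finset_forall_exists_dist_lt (htb : TotallyBounded (univ : Set X)) {r : ℝ}
    (hr : 0 < r) : ∃ s : Finset X, ∀ x, ∃ y ∈ s, dist x y < r := by
  obtain ⟨t, ht, hcov⟩ := Metric.totallyBounded_iff.mp htb r hr
  refine ⟨ht.toFinset, fun x => ?_⟩
  obtain ⟨y, hy, hxy⟩ := mem_iUnion₂.mp (hcov (mem_univ x))
  exact ⟨y, ht.mem_toFinset.mpr hy, hxy⟩

lemma exists_card_le_pow_of_isNSepSet (htb : TotallyBounded (univ : Set X)) (f : X → X)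
    (hε : 0 < ε) : ∃ M : ℕ, ∀ n (E : Finset X), IsNSepSet dist f n ε ↑E → E.card ≤ M ^ n := by
  obtain ⟨s, hs⟩ := exists_finset_forall_exists_dist_lt htb (half_pos hε)
  choose p hp hpx using hs
  refine ⟨s.card, fun n E hE => ?_⟩
  have hinj : Set.InjOn (fun x (j : Fin n) => (⟨p (f^[j] x), hp _⟩ : s)) E := by
    intro x hx y hy hxy
    by_contra hne
    obtain ⟨j, hj, hfar⟩ := hE x hx y hy hne
    have hpj : p (f^[j] x) = p (f^[j] y) := congrArg Subtype.val (congrFun hxy ⟨j, hj⟩)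
    have := dist_triangle_right (f^[j] x) (f^[j] y) (p (f^[j] y))
    linarith [hpx (f^[j] x), hpx (f^[j] y), hpj ▸ hpx (f^[j] x)]
  simpa using Finset.card_le_card_of_injOn _ (fun _ _ => Finset.mem_univ _) hinj

lemma exists_isNSepSet_forall_exists_dist_le (htb : TotallyBounded (univ : Set X)) (f : X → X)
    (n : ℕ) (hε : 0 < ε) : ∃ E : Finset X, IsNSepSet dist f n ε ↑E ∧
      ∀ x, ∃ y ∈ E, ∀ j < n, dist (f^[j] x) (f^[j] y) ≤ ε := by
  classical
  obtain ⟨M, hM⟩ := exists_card_le_pow_of_isNSepSet htb f hε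
  set T := {k | ∃ E : Finset X, IsNSepSet dist f n ε ↑E ∧ E.card = k}
  have hbdd : BddAbove T := ⟨M ^ n, by rintro _ ⟨E, hE, rfl⟩; exact hM n E hE⟩
  have hT : T.Nonempty := ⟨0, ∅, by simp [IsNSepSet], rfl⟩
  obtain ⟨E, hE, hcard⟩ := Nat.sSup_mem hT hbdd
  refine ⟨E, hE, fun x => ?_⟩
  by_contra! hfar
  have hx : x ∉ E := fun hx => by simpa [hε.not_gt] using hfar x hx
  have hmax := le_csSup hbdd ⟨insert x E, by simpa using hE.insert hfar, rfl⟩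
  rw [Finset.card_insert_of_notMem hx, hcard] at hmax
  omega

end Separated

section CoCompactEntropyLeDEntropy

variable {X : Type*} [MetricSpace X] {f : X → X} {n : ℕ}

lemma compactSpace_completion (htb : TotallyBounded (univ : Set X)) :
    CompactSpace (UniformSpace.Completion X) := by
  refine ⟨?_⟩
  rw [← UniformSpace.Completion.denseRange_coe.closure_range, ← image_univ]
  exact (htb.image (UniformSpace.Completion.uniformContinuous_coe X)).closure.isCompact_of_isClosed
    isClosed_closure

lemma IsCoCompactCover.exists_ball_subset (htb : TotallyBounded (univ : Set X))
    {𝒰 : Set (Set X)} (h𝒰 : IsCoCompactCover 𝒰) : ∃ δ > 0, ∀ x, ∃ U ∈ 𝒰, ball x δ ⊆ U := by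
  let ι : X → UniformSpace.Completion X := (↑)
  have hι : Isometry ι := UniformSpace.Completion.coe_isometry
  have := compactSpace_completion htb
  -- `U` lifts to the open set `(ι '' Uᶜ)ᶜ`, which contains every point outside the range of `ι`
  have hopen (U : 𝒰) : IsOpen (ι '' (U : Set X)ᶜ)ᶜ :=
    ((h𝒰.1 U U.2).2.image hι.continuous).isClosed.isOpen_compl
  have hcov : univ ⊆ ⋃ U : 𝒰, (ι '' (U : Set X)ᶜ)ᶜ := by
    intro y _
    by_cases hy : y ∈ range ι
    · obtain ⟨x, rfl⟩ := hy
      obtain ⟨U, hU, hxU⟩ := mem_sUnion.mp (h𝒰.2 ▸ mem_univ x)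
      exact mem_iUnion.mpr ⟨⟨U, hU⟩, fun ⟨z, hz, hzx⟩ => hz (hι.injective hzx ▸ hxU)⟩
    · have : Nonempty X := UniformSpace.Completion.denseRange_coe.nonempty_iff.mpr ⟨y⟩
      obtain ⟨U, hU, -⟩ := mem_sUnion.mp (h𝒰.2 ▸ mem_univ (Classical.arbitrary X))
      exact mem_iUnion.mpr ⟨⟨U, hU⟩, fun ⟨z, _, hz⟩ => hy ⟨z, hz⟩⟩
  obtain ⟨δ, hδ, hleb⟩ := lebesgue_number_lemma_of_metric isCompact_univ hopen hcov
  refine ⟨δ, hδ, fun x => ?_⟩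
  obtain ⟨U, hU⟩ := hleb (ι x) trivial
  refine ⟨U, U.2, fun z hz => ?_⟩
  by_contra hzU
  exact hU (by rwa [mem_ball, hι.dist_eq]) ⟨z, hzU, rfl⟩

lemma coverN_iterJoin_le_card {𝒰 : Set (Set X)} {δ ε : ℝ}
    (hleb : ∀ x, ∃ U ∈ 𝒰, ball x δ ⊆ U) (hεδ : ε < δ) {E : Finset X}
    (hspan : ∀ x, ∃ y ∈ E, ∀ j < n, dist (f^[j] x) (f^[j] y) ≤ ε) :
    coverN (iterJoin f 𝒰 n) ≤ E.card := by
  classical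
  choose u hu hball using hleb
  let cell : X → Set X := fun y => ⋂ j : Fin n, f^[j] ⁻¹' u (f^[j] y)
  refine (coverN_le_card (𝒱 := E.image cell) ?_ ?_).trans Finset.card_image_le
  · rintro _ hW
    obtain ⟨y, -, rfl⟩ := Finset.mem_image.mp hW
    exact ⟨fun j => u (f^[j] y), fun j => hu _, rfl⟩
  · refine eq_univ_of_forall fun x => ?_
    obtain ⟨y, hy, hxy⟩ := hspan x
    exact ⟨cell y, Finset.mem_image_of_mem _ hy,
      mem_iInter.mpr fun j => hball _ ((hxy j j.2).trans_lt hεδ)⟩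

theorem cEnt_le_dEnt (htb : TotallyBounded (univ : Set X)) (f : X → X) :
    cEnt f ≤ dEnt dist f := by
  refine iSup₂_le fun 𝒰 h𝒰 => ?_
  obtain ⟨δ, hδ, hleb⟩ := IsCoCompactCover.exists_ball_subset htb h𝒰
  have key (n : ℕ) : covH (iterJoin f 𝒰 n) ≤ elog (sepCard dist f n (δ / 2) univ) := by
    obtain ⟨E, hE, hspan⟩ := exists_isNSepSet_forall_exists_dist_le htb f n (half_pos hδ)
    calc covH (iterJoin f 𝒰 n) ≤ ENNReal.ofReal (Real.log E.card) :=
          ofReal_log_le_ofReal_log (Nat.cast_nonneg _)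
            (Nat.cast_le.mpr (coverN_iterJoin_le_card hleb (half_lt_self hδ) hspan))
      _ = elog E.card := (elog_natCast _).symm
      _ ≤ elog (sepCard dist f n (δ / 2) univ) := elog_mono (hE.card_le_sepCard (subset_univ _))
  calc cEntCover f 𝒰 ≤ sepEntEps dist f (δ / 2) univ :=
        limsup_le_limsup (.of_forall fun n => ENNReal.div_le_div_right (key n) _)
    _ ≤ dEnt dist f :=
        le_iSup₂ (f := fun ε (_ : 0 < ε) => sepEntEps dist f ε univ) _ (half_pos hδ)

end CoCompactEntropyLeDEntropy

section DEntropyLeCoCompactEntropy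

variable {X : Type*} [MetricSpace X] {f : X → X} {ε δ : ℝ} {m : ℕ}

lemma UniformContinuous.exists_forall_dist_iterate_lt (hf : UniformContinuous f) (m : ℕ)
    (hε : 0 < ε) : ∃ δ > 0, ∀ x y, dist x y < δ → ∀ r < m, dist (f^[r] x) (f^[r] y) < ε := by
  have : UniformContinuous fun x (r : Fin m) => f^[r] x :=
    uniformContinuous_pi.mpr fun r => UniformContinuous.iterate f r hf
  obtain ⟨δ, hδ, h⟩ := Metric.uniformContinuous_iff.mp this ε hε
  exact ⟨δ, hδ, fun x y hxy r hr => (dist_pi_lt_iff hε).mp (h hxy) ⟨r, hr⟩⟩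

lemma exists_finite_isCoCompactCover_forall_dist_lt (htb : TotallyBounded (univ : Set X))
    (hV : ∀ r > 0, ∃ V : Set X, IsCoCompactOpen V ∧ ∀ x ∈ V, ∀ y ∈ V, dist x y < r)
    (hδ : 0 < δ) : ∃ (𝒰 : Set (Set X)) (V : Set X), IsCoCompactCover 𝒰 ∧ 𝒰.Finite ∧
      ∀ U ∈ 𝒰, ∀ x ∈ U, ∀ y ∈ U, (x ∈ V ↔ y ∈ V) → dist x y < δ := by
  obtain ⟨V, ⟨hVo, hVc⟩, hVdist⟩ := hV δ hδ
  obtain ⟨s, hs⟩ := exists_finset_forall_exists_dist_lt htb (half_pos hδ)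
  refine ⟨(fun w => ball w (δ / 2) ∪ V) '' s, V, ⟨?_, ?_⟩, s.finite_toSet.image _, ?_⟩
  · rintro _ ⟨w, -, rfl⟩
    have ho : IsOpen (ball w (δ / 2) ∪ V) := isOpen_ball.union hVo
    exact ⟨ho, hVc.of_isClosed_subset ho.isClosed_compl (compl_subset_compl.mpr subset_union_right)⟩
  · refine eq_univ_of_forall fun x => ?_
    obtain ⟨w, hw, hxw⟩ := hs x
    exact ⟨_, mem_image_of_mem _ hw, Or.inl hxw⟩
  · rintro _ ⟨w, -, rfl⟩ x hx y hy hxy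
    by_cases hxV : x ∈ V
    · exact hVdist x hxV y (hxy.mp hxV)
    · have hx' : x ∈ ball w (δ / 2) := hx.resolve_right hxV
      have hy' : y ∈ ball w (δ / 2) := hy.resolve_right (hxV ∘ hxy.mpr)
      calc dist x y ≤ dist x w + dist y w := dist_triangle_right _ _ _
        _ < δ / 2 + δ / 2 := add_lt_add hx' hy'
        _ = δ := add_halves δ

section Counting

variable {𝒰 : Set (Set X)} {V : Set X}
  (hδ : ∀ x y, dist x y < δ → ∀ r < m, dist (f^[r] x) (f^[r] y) < ε)
  (h𝒰 : ∀ U ∈ 𝒰, ∀ x ∈ U, ∀ y ∈ U, (x ∈ V ↔ y ∈ V) → dist x y < δ)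
include hδ h𝒰

lemma card_le_two_pow_of_subset_iterJoin (hm : 0 < m) {K : ℕ} {E : Finset X}
    (hE : IsNSepSet dist f (K * m) ε E) {W : Set X} (hW : W ∈ iterJoin f 𝒰 (K * m)) :
    ∀ F ⊆ E, ↑F ⊆ W → F.card ≤ 2 ^ K := by
  classical
  obtain ⟨u, hu, rfl⟩ := hW
  intro F hFE hFW
  -- within a cell, a point of `E` is determined by which of its iterates `f^[m * q]` lie in `V`
  have hinj : Set.InjOn (fun x (q : Fin K) => decide (f^[m * q] x ∈ V)) F := by
    intro x hx y hy hxy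
    by_contra hne
    obtain ⟨j, hj, hfar⟩ := hE x (hFE hx) y (hFE hy) hne
    have hq : j / m < K := (Nat.div_lt_iff_lt_mul hm).mpr hj
    let i : Fin (K * m) := ⟨m * (j / m), by nlinarith⟩
    have hclose : dist (f^[m * (j / m)] x) (f^[m * (j / m)] y) < δ :=
      h𝒰 _ (hu i) _ (mem_iInter.mp (hFW hx) i) _ (mem_iInter.mp (hFW hy) i)
        (by simpa using congrFun hxy ⟨j / m, hq⟩)
    have := hδ _ _ hclose (j % m) (Nat.mod_lt j hm)
    rw [← Function.iterate_add_apply, ← Function.iterate_add_apply, Nat.mod_add_div] at this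
    exact lt_asymm hfar this
  calc F.card ≤ (Finset.univ : Finset (Fin K → Bool)).card :=
        Finset.card_le_card_of_injOn _ (fun _ _ => Finset.mem_univ _) hinj
    _ = 2 ^ K := by simp

lemma card_le_two_pow_mul_coverN (hm : 0 < m) (hfin : 𝒰.Finite) (hcov : ⋃₀ 𝒰 = univ) (K : ℕ)
    {E : Finset X} (hE : IsNSepSet dist f (K * m) ε E) :
    E.card ≤ 2 ^ K * coverN (iterJoin f 𝒰 (K * m)) := by
  classical
  obtain ⟨𝒱, h𝒱, h𝒱cov, hcard⟩ :=
    exists_subcover_card_eq_coverN (iterJoin_finite f hfin _) (sUnion_iterJoin f hcov _)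
  choose W hW hxW using fun x => mem_sUnion.mp (h𝒱cov ▸ mem_univ x)
  rw [← hcard]
  refine Finset.card_le_mul_card_image_of_maps_to (fun x _ => hW x) _ fun C hC => ?_
  refine card_le_two_pow_of_subset_iterJoin hδ h𝒰 hm hE (h𝒱 hC) _ (Finset.filter_subset _ _)
    fun x hx => ?_
  obtain ⟨-, rfl⟩ := Finset.mem_filter.mp hx
  exact hxW x

lemma elog_sepCard_le (hm : 0 < m) (hfin : 𝒰.Finite) (hcov : ⋃₀ 𝒰 = univ) (n : ℕ) :
    elog (sepCard dist f n ε univ) ≤ ((n / m + 1 : ℕ) : ℝ≥0∞) * ENNReal.ofReal (Real.log 2) +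
      covH (iterJoin f 𝒰 ((n / m + 1) * m)) := by
  set K := n / m + 1
  set N := coverN (iterJoin f 𝒰 (K * m))
  have hsep : sepCard dist f n ε univ ≤ ((2 ^ K * N : ℕ) : ℝ≥0∞) :=
    iSup₂_le fun E hE => Nat.cast_le.mpr (card_le_two_pow_mul_coverN hδ h𝒰 hm hfin hcov K
      (hE.2.mono ((Nat.div_lt_iff_lt_mul hm).mp (Nat.lt_succ_self _)).le))
  calc elog (sepCard dist f n ε univ) ≤ elog ((2 ^ K * N : ℕ) : ℝ≥0∞) := elog_mono hsep
    _ = ENNReal.ofReal (Real.log ((2 ^ K * N : ℕ) : ℝ)) := elog_natCast _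
    _ ≤ ENNReal.ofReal (Real.log ((2 ^ K : ℕ) : ℝ)) + ENNReal.ofReal (Real.log N) :=
        ofReal_log_natCast_mul_le _ _
    _ = K * ENNReal.ofReal (Real.log 2) + covH (iterJoin f 𝒰 (K * m)) := by
        rw [Nat.cast_pow, Nat.cast_ofNat, Real.log_pow,
          ENNReal.ofReal_mul (Nat.cast_nonneg _), ENNReal.ofReal_natCast]
        rfl

lemma sepEntEps_le_cEntCover (hm : 0 < m) (hfin : 𝒰.Finite) (hcov : ⋃₀ 𝒰 = univ) :
    sepEntEps dist f ε univ ≤ ENNReal.ofReal (Real.log 2) / m + cEntCover f 𝒰 :=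
  limsup_div_le_of_le_blocks ENNReal.ofReal_ne_top hm (elog_sepCard_le hδ h𝒰 hm hfin hcov)

end Counting

theorem dEnt_le_cEnt (htb : TotallyBounded (univ : Set X))
    (hV : ∀ r > 0, ∃ V : Set X, IsCoCompactOpen V ∧ ∀ x ∈ V, ∀ y ∈ V, dist x y < r)
    (hf : UniformContinuous f) : dEnt dist f ≤ cEnt f := by
  refine iSup₂_le fun ε hε => ?_
  have hbound (m : ℕ) (hm : 0 < m) :
      sepEntEps dist f ε univ ≤ ENNReal.ofReal (Real.log 2) / m + cEnt f := by
    obtain ⟨δ, hδ, hδε⟩ := hf.exists_forall_dist_iterate_lt m hε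
    obtain ⟨𝒰, V, h𝒰, hfin, hsplit⟩ := exists_finite_isCoCompactCover_forall_dist_lt htb hV hδ
    calc sepEntEps dist f ε univ ≤ ENNReal.ofReal (Real.log 2) / m + cEntCover f 𝒰 :=
          sepEntEps_le_cEntCover hδε hsplit hm hfin h𝒰.2
      _ ≤ ENNReal.ofReal (Real.log 2) / m + cEnt f := by
          gcongr
          exact le_iSup₂ (f := fun 𝒰 (_ : IsCoCompactCover 𝒰) => cEntCover f 𝒰) 𝒰 h𝒰
  have hlim : Tendsto (fun m : ℕ => ENNReal.ofReal (Real.log 2) / m + cEnt f) atTop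
      (𝓝 (cEnt f)) := by
    simpa using (tendsto_const_div_natCast_atTop ENNReal.ofReal_ne_top).add_const (cEnt f)
  exact ge_of_tendsto hlim (eventually_atTop.mpr ⟨1, hbound⟩)

end DEntropyLeCoCompactEntropy

lemma IsPerfectMap.tendsto_coclosedCompact {X Y : Type*} [TopologicalSpace X] [TopologicalSpace Y]
    {f : X → Y} (hf : IsPerfectMap f) :
    Tendsto f (coclosedCompact X) (coclosedCompact Y) := by
  have hproper : IsProperMap f := isProperMap_iff_isClosedMap_and_compact_fibers.mpr hf
  exact hasBasis_coclosedCompact.tendsto_right_iff.mpr fun s ⟨hsc, hsk⟩ =>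
    (hproper.isCompact_preimage hsk).compl_mem_coclosedCompact_of_isClosed (hsc.preimage hf.1)

namespace IsCompactTypeMetric

variable {X : Type*} [MetricSpace X] (hd : IsCompactTypeMetric (X := X) ‹MetricSpace X›)
include hd

lemma totallyBounded : TotallyBounded (univ : Set X) := by
  obtain ⟨mc, hteq, hdist⟩ := hd
  -- `replaceTopology` makes the topology of `mc` definitionally that of `OnePoint X`
  let _ : MetricSpace (OnePoint X) := mc.replaceTopology hteq.symm
  have hι : Isometry ((↑) : X → OnePoint X) := Isometry.of_dist_eq hdist
  exact totallyBounded_preimage hι.isUniformInducing isCompact_univ.totallyBounded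

lemma uniformContinuous {f : X → X} (hf : IsPerfectMap f) : UniformContinuous f := by
  obtain ⟨mc, hteq, hdist⟩ := hd
  let _ : MetricSpace (OnePoint X) := mc.replaceTopology hteq.symm
  have hι : Isometry ((↑) : X → OnePoint X) := Isometry.of_dist_eq hdist
  have hmap := OnePoint.continuous_map hf.1 hf.tendsto_coclosedCompact
  exact hι.isUniformInducing.uniformContinuous_iff.mpr
    ((CompactSpace.uniformContinuous_of_continuous hmap).comp hι.uniformContinuous)

lemma exists_isCoCompactOpen_forall_dist_lt {r : ℝ} (hr : 0 < r) :
    ∃ V : Set X, IsCoCompactOpen V ∧ ∀ x ∈ V, ∀ y ∈ V, dist x y < r := by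
  obtain ⟨mc, hteq, hdist⟩ := hd
  let _ : MetricSpace (OnePoint X) := mc.replaceTopology hteq.symm
  have hι : Isometry ((↑) : X → OnePoint X) := Isometry.of_dist_eq hdist
  have hopen : IsOpen (ball (OnePoint.infty : OnePoint X) (r / 2)) := isOpen_ball
  obtain ⟨hcpt, hopen'⟩ := (OnePoint.isOpen_iff_of_mem' (mem_ball_self (half_pos hr))).mp hopen
  refine ⟨((↑) : X → OnePoint X) ⁻¹' ball OnePoint.infty (r / 2), ⟨hopen', hcpt⟩,
    fun x hx y hy => ?_⟩
  rw [← hι.dist_eq]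
  calc dist (x : OnePoint X) y
        ≤ dist (x : OnePoint X) OnePoint.infty + dist (y : OnePoint X) OnePoint.infty :=
        dist_triangle_right _ _ _
    _ < r / 2 + r / 2 := add_lt_add hx hy
    _ = r := add_halves r

end IsCompactTypeMetric

theorem dEnt_eq_cEnt_general {X : Type*} [MetricSpace X]
    (hd : IsCompactTypeMetric (X := X) ‹MetricSpace X›)
    (f : X → X) (hf : IsPerfectMap f) :
    dEnt dist f = cEnt f :=
  le_antisymm
    (dEnt_le_cEnt hd.totallyBounded (fun _ => hd.exists_isCoCompactOpen_forall_dist_lt)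
      (hd.uniformContinuous hf))
    (cEnt_le_dEnt hd.totallyBounded f)

/-- For a perfect map `f` on a locally compact separable metric space whose metric
is of compact type, the `d`-entropy equals the co-compact entropy: `h^d(f) = c(f)`. -/
theorem dEnt_eq_cEnt {X : Type*} [MetricSpace X] [LocallyCompactSpace X]
    [TopologicalSpace.SeparableSpace X]
    (hd : IsCompactTypeMetric (X := X) ‹MetricSpace X›)
    (f : X → X) (hf : IsPerfectMap f) :
    dEnt dist f = cEnt f :=
  dEnt_eq_cEnt_general hd f hf
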